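/- arXiv:1704.05109 — 2 statements merged into one kernel-verified Lean document; each statement's English description precedes it below -/
import Mathlib

section
/- Let X be a smooth cubic surface over a field k with a k-line L, and f : X → P¹ the conic bundle given by planes through L. Then f admits a section if and only if there exists a k-line L' ⊂ X disjoint from L; moreover every such line L' is a section of f. -/
/-!
Model: the Picard group of a smooth cubic surface over a separably closed
field is identified with `ℤ⁷ = Fin 7 → ℤ` with its standard basis
`λ₀, L₁, …, L₆` (pullback of a line and the six exceptional classes),
intersection form `picInter`, canonical class `KX = -3λ₀ + L₁ + ⋯ + L₆`.
The classes of the 27 lines are exactly the classes `l` with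
`l·l = -1` and `KX·l = -1`.
-/

def picInter (a b : Fin 7 → ℤ) : ℤ := a 0 * b 0 - ∑ i : Fin 6, a i.succ * b i.succ

def KX : Fin 7 → ℤ := ![-3, 1, 1, 1, 1, 1, 1]

def IsLineClass (l : Fin 7 → ℤ) : Prop := picInter l l = -1 ∧ picInter KX l = -1

/-!
Galois model: for a smooth cubic surface `X` over a field `k`, split by a
finite Galois extension with group `G`, the Galois action on the geometric
Picard group is a homomorphism `ρ : G →* AddAut (Fin 7 → ℤ)` preserving the
intersection form, the canonical class and the set of line classes.
`Pic(X)` is identified with the fixed subgroup `fixedSubgroup ρ`, and the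
subgroup `Δ ⊆ Pic(X)` generated by norms (from finite separable extensions)
of lines is `Delta ρ`: the subgroup generated by the Galois-orbit sums
(= norms from the field of definition) of the 27 line classes.
-/

variable {G : Type*} [Group G] [Fintype G]

noncomputable def normOrbit (ρ : G →* Multiplicative (AddAut (Fin 7 → ℤ))) (l : Fin 7 → ℤ) : Fin 7 → ℤ :=
  ∑ m ∈ Finset.image (fun g => (ρ g).toAdd l) Finset.univ, m

noncomputable def Delta (ρ : G →* Multiplicative (AddAut (Fin 7 → ℤ))) : AddSubgroup (Fin 7 → ℤ) :=
  AddSubgroup.closure { x | ∃ l, IsLineClass l ∧ x = normOrbit ρ l }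

def fixedSubgroup (ρ : G →* Multiplicative (AddAut (Fin 7 → ℤ))) : AddSubgroup (Fin 7 → ℤ) where
  carrier := {x | ∀ g, (ρ g).toAdd x = x}
  zero_mem' := fun g => map_zero (ρ g).toAdd
  add_mem' := fun {a b} ha hb g => by rw [map_add, ha g, hb g]
  neg_mem' := fun {a} ha g => by rw [map_neg, ha g]

/-!
A line `L'` skew to `L` meets the fibre class `F = -KX - L` once, so it is a section. Conversely,
let `s` be a Galois-fixed class with `s·F = 1`. Moving `L` to `E₆` by reflections in roots
`a - b` (`a, b` skew lines), a finite check shows that some line `l` skew to `L` satisfies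
`l ≡ s` modulo `2 Pic X̄ + ℤ L + ℤ KX`. Each Galois conjugate of `l` satisfies the same congruence,
hence differs from `l` by `2v`. But distinct lines are never congruent mod 2: `v` would lie in the
negative definite even lattice `KX^⊥`, so `v² ≤ -2`, which forces `l·l' ≥ 3`, while distinct lines
meet at most once. Hence `l` is Galois-fixed.
-/

lemma picInter_expand (a b : Fin 7 → ℤ) : picInter a b =
    a 0 * b 0 - (a 1 * b 1 + a 2 * b 2 + a 3 * b 3 + a 4 * b 4 + a 5 * b 5 + a 6 * b 6) := by
  simp [picInter, Fin.sum_univ_six]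

lemma picInter_KX_left (x : Fin 7 → ℤ) :
    picInter KX x = -3 * x 0 - (x 1 + x 2 + x 3 + x 4 + x 5 + x 6) := by
  simp [picInter_expand, KX]

lemma picInter_comm (a b : Fin 7 → ℤ) : picInter a b = picInter b a := by
  simp only [picInter, mul_comm]

lemma picInter_add_left (a b c : Fin 7 → ℤ) :
    picInter (a + b) c = picInter a c + picInter b c := by
  simp only [picInter, Pi.add_apply, add_mul, Finset.sum_add_distrib]
  ring

lemma picInter_sub_left (a b c : Fin 7 → ℤ) :
    picInter (a - b) c = picInter a c - picInter b c := by
  simp only [picInter, Pi.sub_apply, sub_mul, Finset.sum_sub_distrib]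
  ring

lemma picInter_smul_left (n : ℤ) (a b : Fin 7 → ℤ) : picInter (n • a) b = n * picInter a b := by
  simp only [picInter, Pi.smul_apply, smul_eq_mul, mul_assoc, ← Finset.mul_sum]
  ring

lemma picInter_nsmul_left (n : ℕ) (a b : Fin 7 → ℤ) : picInter (n • a) b = n * picInter a b := by
  simp only [picInter, Pi.smul_apply, nsmul_eq_mul, mul_assoc, ← Finset.mul_sum]
  ring

lemma picInter_add_right (a b c : Fin 7 → ℤ) :
    picInter a (b + c) = picInter a b + picInter a c := by
  rw [picInter_comm, picInter_add_left, picInter_comm b, picInter_comm c]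

lemma picInter_sub_right (a b c : Fin 7 → ℤ) :
    picInter a (b - c) = picInter a b - picInter a c := by
  rw [picInter_comm, picInter_sub_left, picInter_comm b, picInter_comm c]

lemma picInter_smul_right (n : ℤ) (a b : Fin 7 → ℤ) : picInter a (n • b) = n * picInter a b := by
  rw [picInter_comm, picInter_smul_left, picInter_comm]

lemma picInter_nsmul_right (n : ℕ) (a b : Fin 7 → ℤ) : picInter a (n • b) = n * picInter a b := by
  rw [picInter_comm, picInter_nsmul_left, picInter_comm]

lemma picInter_neg_right (a b : Fin 7 → ℤ) : picInter a (-b) = -picInter a b := by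
  rw [← neg_one_zsmul, picInter_smul_right, neg_one_mul]

lemma picInter_KX_KX : picInter KX KX = 3 := by decide

lemma even_picInter_self_sub_picInter_KX (x : Fin 7 → ℤ) :
    Even (picInter x x - picInter KX x) := by
  have h : picInter x x - picInter KX x = x 0 * (x 0 + 1) + 2 * x 0 -
      (x 1 * (x 1 - 1) + x 2 * (x 2 - 1) + x 3 * (x 3 - 1) + x 4 * (x 4 - 1) +
        x 5 * (x 5 - 1) + x 6 * (x 6 - 1)) := by
    rw [picInter_expand, picInter_KX_left]
    ring
  rw [h]
  refine ((Int.even_mul_succ_self _).add (even_two_mul _)).sub ?_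
  repeat' apply Even.add
  all_goals exact Int.even_mul_pred_self _

lemma picInter_self_neg_of_orthogonal {w : Fin 7 → ℤ} (hK : picInter KX w = 0) (hw : w ≠ 0) :
    picInter w w < 0 := by
  rw [picInter_KX_left] at hK
  rw [picInter_expand]
  by_contra! h
  have hsum : w 1 + w 2 + w 3 + w 4 + w 5 + w 6 = -3 * w 0 := by linarith
  -- Cauchy–Schwarz: `9 w₀² = (w₁ + ⋯ + w₆)² ≤ 6 (w₁² + ⋯ + w₆²) ≤ 6 w₀²`.
  have hw0 : w 0 = 0 := by
    nlinarith [sq_nonneg (w 1 - w 2), sq_nonneg (w 1 - w 3), sq_nonneg (w 1 - w 4),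
      sq_nonneg (w 1 - w 5), sq_nonneg (w 1 - w 6), sq_nonneg (w 2 - w 3), sq_nonneg (w 2 - w 4),
      sq_nonneg (w 2 - w 5), sq_nonneg (w 2 - w 6), sq_nonneg (w 3 - w 4), sq_nonneg (w 3 - w 5),
      sq_nonneg (w 3 - w 6), sq_nonneg (w 4 - w 5), sq_nonneg (w 4 - w 6), sq_nonneg (w 5 - w 6)]
  apply hw
  funext i
  fin_cases i <;> simp only [Fin.zero_eta, Fin.mk_one, Fin.reduceFinMk, Pi.zero_apply, hw0] <;>
    nlinarith [mul_self_nonneg (w 1), mul_self_nonneg (w 2), mul_self_nonneg (w 3),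
      mul_self_nonneg (w 4), mul_self_nonneg (w 5), mul_self_nonneg (w 6)]

lemma picInter_self_nonpos_of_orthogonal {w : Fin 7 → ℤ} (hK : picInter KX w = 0) :
    picInter w w ≤ 0 := by
  rcases eq_or_ne w 0 with rfl | hw
  · decide
  · exact (picInter_self_neg_of_orthogonal hK hw).le

lemma picInter_self_le_neg_two_of_orthogonal {w : Fin 7 → ℤ} (hK : picInter KX w = 0)
    (hw : w ≠ 0) : picInter w w ≤ -2 := by
  obtain ⟨r, hr⟩ := even_picInter_self_sub_picInter_KX w
  have := picInter_self_neg_of_orthogonal hK hw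
  omega

namespace IsLineClass

variable {a b : Fin 7 → ℤ}

lemma picInter_nonneg (ha : IsLineClass a) (hb : IsLineClass b) (hne : a ≠ b) :
    0 ≤ picInter a b := by
  have hK : picInter KX (a - b) = 0 := by rw [picInter_sub_right, ha.2, hb.2, sub_self]
  have h := picInter_self_le_neg_two_of_orthogonal hK (sub_ne_zero.mpr hne)
  rw [picInter_sub_left, picInter_sub_right, picInter_sub_right, ha.1, hb.1,
    picInter_comm b a] at h
  omega

/-- `3a + 3b + 2KX` is orthogonal to `KX`, and its square is `18 a·b - 30`. -/
lemma picInter_le_one (ha : IsLineClass a) (hb : IsLineClass b) : picInter a b ≤ 1 := by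
  have hK : picInter KX ((3 : ℤ) • a + (3 : ℤ) • b + (2 : ℤ) • KX) = 0 := by
    rw [picInter_add_right, picInter_add_right, picInter_smul_right, picInter_smul_right,
      picInter_smul_right, ha.2, hb.2, picInter_KX_KX]
    norm_num
  have h := picInter_self_nonpos_of_orthogonal hK
  simp only [picInter_add_left, picInter_add_right, picInter_smul_left, picInter_smul_right,
    ha.1, hb.1, picInter_KX_KX, picInter_comm b a, picInter_comm a KX, picInter_comm b KX,
    ha.2, hb.2] at h
  omega

lemma eq_of_eq_add_two_smul (ha : IsLineClass a) (hb : IsLineClass b) {v : Fin 7 → ℤ}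
    (h : a = b + 2 • v) : a = b := by
  by_contra hne
  have hv : v ≠ 0 := by rintro rfl; exact hne (by simpa using h)
  have hK : picInter KX v = 0 := by
    have := congrArg (picInter KX) h
    rw [picInter_add_right, picInter_nsmul_right, ha.2, hb.2] at this
    omega
  have hvv := picInter_self_le_neg_two_of_orthogonal hK hv
  have hab := ha.picInter_le_one hb
  have hsq : picInter (a - b) (a - b) = 4 * picInter v v := by
    rw [h, add_sub_cancel_left, picInter_nsmul_left, picInter_nsmul_right]
    push_cast
    ring
  rw [picInter_sub_left, picInter_sub_right, picInter_sub_right, ha.1, hb.1,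
    picInter_comm b a] at hsq
  omega

end IsLineClass

structure IsPicIsometry (σ : (Fin 7 → ℤ) ≃+ (Fin 7 → ℤ)) : Prop where
  picInter_map : ∀ a b, picInter (σ a) (σ b) = picInter a b
  map_KX : σ KX = KX

namespace IsPicIsometry

variable {σ τ : (Fin 7 → ℤ) ≃+ (Fin 7 → ℤ)}

lemma refl : IsPicIsometry (AddEquiv.refl (Fin 7 → ℤ)) := ⟨fun _ _ => rfl, rfl⟩

lemma trans (hσ : IsPicIsometry σ) (hτ : IsPicIsometry τ) : IsPicIsometry (σ.trans τ) :=
  ⟨fun a b => by simp only [AddEquiv.trans_apply, hτ.picInter_map, hσ.picInter_map],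
    by simp only [AddEquiv.trans_apply, hσ.map_KX, hτ.map_KX]⟩

lemma symm (hσ : IsPicIsometry σ) : IsPicIsometry σ.symm :=
  ⟨fun a b => by rw [← hσ.picInter_map, σ.apply_symm_apply, σ.apply_symm_apply],
    σ.symm_apply_eq.mpr hσ.map_KX.symm⟩

lemma isLineClass (hσ : IsPicIsometry σ) {l : Fin 7 → ℤ} (hl : IsLineClass l) :
    IsLineClass (σ l) :=
  ⟨by rw [hσ.picInter_map, hl.1], by rw [← hσ.map_KX, hσ.picInter_map, hl.2]⟩

end IsPicIsometry

lemma picReflection_involutive {r : Fin 7 → ℤ} (hr : picInter r r = -2) :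
    Function.Involutive fun x => x + picInter x r • r := by
  intro x
  simp only [picInter_add_left, picInter_smul_left, hr]
  module

def picReflection (r : Fin 7 → ℤ) (hr : picInter r r = -2) :
    (Fin 7 → ℤ) ≃+ (Fin 7 → ℤ) where
  toFun x := x + picInter x r • r
  invFun x := x + picInter x r • r
  left_inv := picReflection_involutive hr
  right_inv := picReflection_involutive hr
  map_add' x y := by
    simp only [picInter_add_left, add_smul]
    abel

lemma picReflection_apply (r : Fin 7 → ℤ) (hr : picInter r r = -2) (x : Fin 7 → ℤ) :
    picReflection r hr x = x + picInter x r • r := rfl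

lemma isPicIsometry_picReflection {r : Fin 7 → ℤ} (hr : picInter r r = -2)
    (hKr : picInter KX r = 0) : IsPicIsometry (picReflection r hr) where
  picInter_map a b := by
    simp only [picReflection_apply, picInter_add_left, picInter_add_right, picInter_smul_left,
      picInter_smul_right, hr, picInter_comm r b]
    ring
  map_KX := by rw [picReflection_apply, hKr, zero_smul, add_zero]

lemma exists_isPicIsometry_apply_eq_of_skew {a b : Fin 7 → ℤ} (ha : IsLineClass a)
    (hb : IsLineClass b) (hab : picInter a b = 0) :
    ∃ σ, IsPicIsometry σ ∧ σ a = b := by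
  have hr : picInter (a - b) (a - b) = -2 := by
    rw [picInter_sub_left, picInter_sub_right, picInter_sub_right, ha.1, hb.1, hab,
      picInter_comm b a, hab]
    norm_num
  have hKr : picInter KX (a - b) = 0 := by rw [picInter_sub_right, ha.2, hb.2, sub_self]
  refine ⟨picReflection (a - b) hr, isPicIsometry_picReflection hr hKr, ?_⟩
  rw [picReflection_apply, picInter_sub_right, ha.1, hab]
  module

/-- `exc j` is the exceptional class `E_{j+1}`, so `exc 5 = E₆`. -/
def exc (j : Fin 6) : Fin 7 → ℤ := Pi.single j.succ 1

lemma picInter_exc (x : Fin 7 → ℤ) (j : Fin 6) : picInter x (exc j) = -x j.succ := by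
  simp [picInter, exc, Pi.single_apply, Fin.succ_ne_zero]

lemma isLineClass_exc (j : Fin 6) : IsLineClass (exc j) := by
  refine ⟨by rw [picInter_exc]; simp [exc], ?_⟩
  rw [picInter_exc]
  fin_cases j <;> rfl

lemma picInter_exc_castSucc_exc_five (j : Fin 5) : picInter (exc j.castSucc) (exc 5) = 0 := by
  fin_cases j <;> rfl

/-- A line meeting `E₆` would otherwise meet all of `E₁, …, E₆`, forcing `3 l₀ = 7`. -/
lemma exists_picInter_exc_castSucc_eq_zero {L : Fin 7 → ℤ} (hL : IsLineClass L)
    (h : picInter L (exc 5) = 1) : ∃ j : Fin 5, picInter L (exc j.castSucc) = 0 := by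
  by_contra! hne
  have hcoord : ∀ j : Fin 6, L j.succ = -1 := by
    intro j
    induction j using Fin.lastCases with
    | last => rw [picInter_exc] at h; exact neg_eq_iff_eq_neg.mp h
    | cast j =>
      have hLj : L ≠ exc j.castSucc := by
        rintro rfl
        rw [picInter_exc_castSucc_exc_five] at h
        exact zero_ne_one h
      have h0 := hL.picInter_nonneg (isLineClass_exc _) hLj
      have h1 := hL.picInter_le_one (isLineClass_exc j.castSucc)
      have := hne j
      rw [picInter_exc] at h0 h1 this
      omega
  obtain ⟨h1, h2, h3, h4, h5, h6⟩ : L 1 = -1 ∧ L 2 = -1 ∧ L 3 = -1 ∧ L 4 = -1 ∧ L 5 = -1 ∧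
      L 6 = -1 := ⟨hcoord 0, hcoord 1, hcoord 2, hcoord 3, hcoord 4, hcoord 5⟩
  have hK := hL.2
  rw [picInter_KX_left] at hK
  omega

lemma exists_isPicIsometry_apply_eq_exc_five {L : Fin 7 → ℤ} (hL : IsLineClass L) :
    ∃ σ, IsPicIsometry σ ∧ σ L = exc 5 := by
  rcases eq_or_ne L (exc 5) with rfl | hne
  · exact ⟨_, .refl, rfl⟩
  have h0 := hL.picInter_nonneg (isLineClass_exc 5) hne
  have h1 := hL.picInter_le_one (isLineClass_exc 5)
  rcases (by omega : picInter L (exc 5) = 0 ∨ picInter L (exc 5) = 1) with hskew | hmeet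
  · exact exists_isPicIsometry_apply_eq_of_skew hL (isLineClass_exc 5) hskew
  obtain ⟨j, hj⟩ := exists_picInter_exc_castSucc_eq_zero hL hmeet
  obtain ⟨σ, hσ, hσL⟩ := exists_isPicIsometry_apply_eq_of_skew hL (isLineClass_exc _) hj
  obtain ⟨τ, hτ, hτE⟩ := exists_isPicIsometry_apply_eq_of_skew (isLineClass_exc j.castSucc)
    (isLineClass_exc 5) (picInter_exc_castSucc_exc_five j)
  exact ⟨σ.trans τ, hσ.trans hτ, by rw [AddEquiv.trans_apply, hσL, hτE]⟩

lemma exists_eq_add_two_smul_of_intCast_eq {ι : Type*} {x y : ι → ℤ}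
    (h : ∀ i, (x i : ZMod 2) = y i) : ∃ v, x = y + 2 • v := by
  refine ⟨fun i => (x i - y i) / 2, funext fun i => ?_⟩
  have := (ZMod.intCast_eq_intCast_iff_dvd_sub _ _ 2).mp (h i).symm
  push_cast at this
  rw [Pi.add_apply, Pi.smul_apply, nsmul_eq_mul, Nat.cast_ofNat]
  omega

def linesSkewToExcFive : List (Fin 7 → ℤ) := [
  ![0, 1, 0, 0, 0, 0, 0], ![0, 0, 1, 0, 0, 0, 0], ![0, 0, 0, 1, 0, 0, 0],
  ![0, 0, 0, 0, 1, 0, 0], ![0, 0, 0, 0, 0, 1, 0],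
  ![1, -1, -1, 0, 0, 0, 0], ![1, -1, 0, -1, 0, 0, 0], ![1, -1, 0, 0, -1, 0, 0],
  ![1, -1, 0, 0, 0, -1, 0], ![1, 0, -1, -1, 0, 0, 0], ![1, 0, -1, 0, -1, 0, 0],
  ![1, 0, -1, 0, 0, -1, 0], ![1, 0, 0, -1, -1, 0, 0], ![1, 0, 0, -1, 0, -1, 0],
  ![1, 0, 0, 0, -1, -1, 0],
  ![2, -1, -1, -1, -1, -1, 0]]

lemma isLineClass_and_skew_of_mem_linesSkewToExcFive :
    ∀ l ∈ linesSkewToExcFive, IsLineClass l ∧ picInter (exc 5) l = 0 := by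
  simp only [IsLineClass]
  decide +kernel

/-- For `t` the reduction of `s`, the hypothesis says that `s·(-KX - E₆)` is odd. -/
lemma exists_mem_linesSkewToExcFive_intCast_eq :
    ∀ t : Fin 7 → ZMod 2, t 0 + t 1 + t 2 + t 3 + t 4 + t 5 = 1 →
      ∃ l ∈ linesSkewToExcFive, ∃ a b : ZMod 2,
        ∀ i, (l i : ZMod 2) = t i + a * (exc 5 i : ZMod 2) + b * (KX i : ZMod 2) := by
  decide +kernel

lemma exists_skew_line_eq_add_two_smul_exc_five {s : Fin 7 → ℤ}
    (hs : picInter s (-KX - exc 5) = 1) :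
    ∃ l, IsLineClass l ∧ picInter (exc 5) l = 0 ∧
      ∃ (a b : ℤ) (v : Fin 7 → ℤ), l = s + a • exc 5 + b • KX + 2 • v := by
  have hodd : (s 0 : ZMod 2) + s 1 + s 2 + s 3 + s 4 + s 5 = 1 := by
    have hsum : s 0 + s 1 + s 2 + s 3 + s 4 + s 5 = 1 - 2 * (s 0 + s 6) := by
      have h6 : picInter s (exc 5) = -s 6 := picInter_exc s 5
      rw [picInter_sub_right, picInter_neg_right, picInter_comm, picInter_KX_left, h6] at hs
      linarith
    have := congrArg (Int.cast : ℤ → ZMod 2) hsum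
    push_cast at this
    reduce_mod_char at this
    exact this
  obtain ⟨l, hl, a, b, hlab⟩ := exists_mem_linesSkewToExcFive_intCast_eq (fun i => s i) hodd
  obtain ⟨hline, hskew⟩ := isLineClass_and_skew_of_mem_linesSkewToExcFive l hl
  obtain ⟨v, hv⟩ := exists_eq_add_two_smul_of_intCast_eq
    (y := s + (a.cast : ℤ) • exc 5 + (b.cast : ℤ) • KX) fun i => by
      rw [hlab i]
      simp only [Pi.add_apply, Pi.smul_apply, smul_eq_mul]
      push_cast [ZMod.intCast_zmod_cast]
      rfl
  exact ⟨l, hline, hskew, _, _, v, hv⟩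

lemma exists_skew_line_eq_add_two_smul {L s : Fin 7 → ℤ} (hL : IsLineClass L)
    (hs : picInter s (-KX - L) = 1) :
    ∃ l, IsLineClass l ∧ picInter L l = 0 ∧
      ∃ (a b : ℤ) (v : Fin 7 → ℤ), l = s + a • L + b • KX + 2 • v := by
  obtain ⟨σ, hσ, hσL⟩ := exists_isPicIsometry_apply_eq_exc_five hL
  have hσs : picInter (σ s) (-KX - exc 5) = 1 := by
    rw [← hσL, ← hσ.map_KX, ← map_neg, ← map_sub, hσ.picInter_map, hs]
  obtain ⟨l, hl, hskew, a, b, v, hlv⟩ := exists_skew_line_eq_add_two_smul_exc_five hσs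
  have hσL' : σ.symm (exc 5) = L := σ.symm_apply_eq.mpr hσL.symm
  refine ⟨σ.symm l, hσ.symm.isLineClass hl, ?_, a, b, σ.symm v, ?_⟩
  · rw [← hσL', hσ.symm.picInter_map, hskew]
  · rw [hlv, map_add, map_add, map_add, map_zsmul, map_zsmul, map_nsmul, hσL', hσ.symm.map_KX,
      σ.symm_apply_apply]

lemma IsLineClass.picInter_neg_KX_sub {l : Fin 7 → ℤ} (hl : IsLineClass l) (L : Fin 7 → ℤ) :
    picInter l (-KX - L) = 1 - picInter L l := by
  rw [picInter_sub_right, picInter_neg_right, picInter_comm l KX, hl.2, picInter_comm, neg_neg]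

theorem stmt6_general
    (ρ : G →* Multiplicative (AddAut (Fin 7 → ℤ)))
    (hint : ∀ (g : G) (a b : Fin 7 → ℤ), picInter ((ρ g).toAdd a) ((ρ g).toAdd b) = picInter a b)
    (hK : ∀ g : G, (ρ g).toAdd KX = KX)
    (L : Fin 7 → ℤ) (hL : IsLineClass L) (hLfix : ∀ g : G, (ρ g).toAdd L = L) :
    ((∃ s : Fin 7 → ℤ, (∀ g : G, (ρ g).toAdd s = s) ∧ picInter s (-KX - L) = 1) ↔
        ∃ L', IsLineClass L' ∧ (∀ g : G, (ρ g).toAdd L' = L') ∧ picInter L L' = 0) ∧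
      ∀ L', IsLineClass L' → (∀ g : G, (ρ g).toAdd L' = L') → picInter L L' = 0 →
        picInter L' (-KX - L) = 1 := by
  have hsection : ∀ L', IsLineClass L' → picInter L L' = 0 → picInter L' (-KX - L) = 1 :=
    fun L' hL' h0 => by rw [hL'.picInter_neg_KX_sub, h0, sub_zero]
  refine ⟨⟨fun ⟨s, hs, hsF⟩ => ?_, fun ⟨L', hL', hfix, h0⟩ => ⟨L', hfix, hsection L' hL' h0⟩⟩,
    fun L' hL' _ h0 => hsection L' hL' h0⟩
  obtain ⟨l, hl, hLl, a, b, v, rfl⟩ := exists_skew_line_eq_add_two_smul hL hsF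
  refine ⟨_, hl, fun g => ?_, hLl⟩
  have hg : IsPicIsometry (ρ g).toAdd := ⟨hint g, hK g⟩
  refine (hg.isLineClass hl).eq_of_eq_add_two_smul hl (v := (ρ g).toAdd v - v) ?_
  simp only [map_add, map_zsmul, map_nsmul, hs g, hLfix g, hK g]
  module

/-- Let `L` be a `k`-line on a smooth cubic surface `X/k` and `f : X → ℙ¹`
the associated conic bundle, with fibre class `F = -KX - L`.  Then `f`
admits a section (equivalently, there is a Galois-fixed class of
fibre-degree 1) iff there is a `k`-line `L'` disjoint from `L`; and every
such `L'` is a section of `f`. -/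
theorem stmt6
    (ρ : G →* Multiplicative (AddAut (Fin 7 → ℤ)))
    (hlines : ∀ (g : G) (l : Fin 7 → ℤ), IsLineClass l → IsLineClass ((ρ g).toAdd l))
    (hint : ∀ (g : G) (a b : Fin 7 → ℤ), picInter ((ρ g).toAdd a) ((ρ g).toAdd b) = picInter a b)
    (hK : ∀ g : G, (ρ g).toAdd KX = KX)
    (L : Fin 7 → ℤ) (hL : IsLineClass L) (hLfix : ∀ g : G, (ρ g).toAdd L = L) :
    ((∃ s : Fin 7 → ℤ, (∀ g : G, (ρ g).toAdd s = s) ∧ picInter s (-KX - L) = 1) ↔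
        ∃ L', IsLineClass L' ∧ (∀ g : G, (ρ g).toAdd L' = L') ∧ picInter L L' = 0) ∧
      ∀ L', IsLineClass L' → (∀ g : G, (ρ g).toAdd L' = L') → picInter L L' = 0 →
        picInter L' (-KX - L) = 1 :=
  stmt6_general ρ hint hK L hL hLfix
end

section
/- A smooth conic over a field F possessing a point over a field extension of odd degree has an F-rational point. -/
/-!
Springer's argument. Let `q` be anisotropic over `F`. For nonzero `f : n → F[X]`, `q(f)` is
nonzero of degree exactly `2 max deg fᵢ`, its top coefficient being `q` of the vector of top
coefficients of the `fᵢ`. Suppose `q` had a nontrivial zero over `F[X]/(p)`, `p` irreducible of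
odd degree `d`. Lift it to a primitive vector `f` with `deg fᵢ < d`; then `q(f) = p h` where
`deg h = 2 max deg fᵢ - d` is odd and `< d`. An irreducible factor `g` of `h` of odd degree gives a
zero over `F[X]/(g)`, which by induction on `d` is trivial: `g` divides every `fᵢ`, contradicting
primitivity. A finite extension of odd degree is a tower of simple extensions of odd degree, each
isomorphic to some `F[X]/(p)`.
-/

open Polynomial

open scoped TensorProduct

theorem Polynomial.exists_irreducible_dvd_odd_natDegree {F : Type*} [Field F] {h : F[X]}
    (hodd : Odd h.natDegree) : ∃ g : F[X], Irreducible g ∧ g ∣ h ∧ Odd g.natDegree := by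
  induction h using UniqueFactorizationMonoid.induction_on_prime with
  | h₁ => simp at hodd
  | h₂ x hx => simp [natDegree_eq_zero_of_isUnit hx] at hodd
  | h₃ a p ha hp ih =>
    by_cases hpo : Odd p.natDegree
    · exact ⟨p, hp.irreducible, dvd_mul_right _ _, hpo⟩
    · rw [natDegree_mul hp.ne_zero ha, Nat.odd_add'] at hodd
      obtain ⟨g, hg, hga, hgo⟩ := ih (hodd.2 (Nat.not_odd_iff_even.1 hpo))
      exact ⟨g, hg, hga.trans (dvd_mul_left _ _), hgo⟩

theorem AdjoinRoot.exists_natDegree_lt_mk_eq {F : Type*} [Field F] {p : F[X]}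
    (hp : p.natDegree ≠ 0) (z : AdjoinRoot p) :
    ∃ g : F[X], g.natDegree < p.natDegree ∧ AdjoinRoot.mk p g = z := by
  obtain ⟨g, rfl⟩ := AdjoinRoot.mk_surjective z
  refine ⟨g % p, natDegree_mod_lt g hp, AdjoinRoot.mk_eq_mk.2 ⟨-(g / p), ?_⟩⟩
  rw [EuclideanDomain.mod_eq_sub_mul_div]
  ring

namespace Matrix

variable {n : Type*} [Fintype n] [DecidableEq n]

theorem toQuadraticForm'_apply {R : Type*} [CommRing R] (M : Matrix n n R) (x : n → R) :
    M.toQuadraticForm' x = ∑ i, ∑ j, M i j * x i * x j := by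
  simp only [toQuadraticForm', LinearMap.BilinMap.toQuadraticMap_apply, toLinearMap₂'_apply,
    smul_eq_mul]
  exact Finset.sum_congr rfl fun i _ => Finset.sum_congr rfl fun j _ => by ring

theorem map_toQuadraticForm' {R S : Type*} [CommRing R] [CommRing S] (φ : R →+* S)
    (M : Matrix n n R) (x : n → R) :
    φ (M.toQuadraticForm' x) = (M.map φ).toQuadraticForm' (φ ∘ x) := by
  simp [toQuadraticForm'_apply, map_sum]

theorem anisotropic_toQuadraticForm'_of_map {R S : Type*} [CommRing R] [CommRing S]
    {φ : R →+* S} (hφ : Function.Injective φ) {M : Matrix n n R}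
    (h : (M.map φ).toQuadraticForm'.Anisotropic) : M.toQuadraticForm'.Anisotropic := by
  intro x hx
  have : φ ∘ x = 0 := h _ (by rw [← map_toQuadraticForm', hx, map_zero])
  exact funext fun i => hφ (by simpa using congrFun this i)

theorem anisotropic_toQuadraticForm'_map_algebraMap_of_algHom {K A B : Type*} [CommRing K]
    [CommRing A] [CommRing B] [Algebra K A] [Algebra K B] (ψ : A →ₐ[K] B)
    (hψ : Function.Injective ψ) {M : Matrix n n K}
    (h : (M.map (algebraMap K B)).toQuadraticForm'.Anisotropic) :
    (M.map (algebraMap K A)).toQuadraticForm'.Anisotropic := by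
  refine anisotropic_toQuadraticForm'_of_map (φ := (ψ : A →+* B)) hψ ?_
  rwa [Matrix.map_map, ← RingHom.coe_comp, ψ.comp_algebraMap]

section Polynomial

variable {K : Type*} [CommRing K] (M : Matrix n n K)

theorem natDegree_toQuadraticForm'_map_C_le {f : n → K[X]} {m : ℕ}
    (hf : ∀ i, (f i).natDegree ≤ m) :
    ((M.map C).toQuadraticForm' f).natDegree ≤ 2 * m := by
  rw [toQuadraticForm'_apply]
  refine natDegree_sum_le_of_forall_le _ _ fun i _ =>
    natDegree_sum_le_of_forall_le _ _ fun j _ => ?_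
  rw [map_apply, mul_assoc, two_mul]
  exact (natDegree_C_mul_le _ _).trans (natDegree_mul_le_of_le (hf i) (hf j))

theorem coeff_toQuadraticForm'_map_C {f : n → K[X]} {m : ℕ} (hf : ∀ i, (f i).natDegree ≤ m) :
    ((M.map C).toQuadraticForm' f).coeff (2 * m) = M.toQuadraticForm' fun i => (f i).coeff m := by
  simp only [toQuadraticForm'_apply, finsetSum_coeff, map_apply, mul_assoc, coeff_C_mul, two_mul,
    coeff_mul_add_eq_of_natDegree_le (hf _) (hf _)]

variable {F : Type*} [Field F] {N : Matrix n n F}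

theorem coeff_toQuadraticForm'_map_C_ne_zero (hN : N.toQuadraticForm'.Anisotropic) {f : n → F[X]}
    (hf : f ≠ 0) :
    ((N.map C).toQuadraticForm' f).coeff (2 * Finset.univ.sup fun i => (f i).natDegree) ≠ 0 := by
  set m := Finset.univ.sup fun i => (f i).natDegree
  have hm : ∀ i, (f i).natDegree ≤ m := fun i => Finset.le_sup (f := fun i => (f i).natDegree)
    (Finset.mem_univ i)
  rw [coeff_toQuadraticForm'_map_C N hm]
  refine fun h => hf ?_
  have hc : ∀ i, (f i).coeff m = 0 := congrFun (hN _ h)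
  obtain ⟨i₀, -⟩ := Function.ne_iff.1 hf
  obtain ⟨i₁, -, hi₁⟩ := Finset.exists_mem_eq_sup _ ⟨i₀, Finset.mem_univ _⟩
    fun i => (f i).natDegree
  by_cases h₁ : f i₁ = 0
  · have hm0 : m = 0 := by rwa [h₁, natDegree_zero] at hi₁
    funext i
    rw [eq_C_of_natDegree_eq_zero (p := f i) (Nat.le_zero.1 (hm0 ▸ hm i)), ← hm0, hc, map_zero,
      Pi.zero_apply]
  · exact absurd (by rw [leadingCoeff, ← hi₁]; exact hc i₁) (leadingCoeff_ne_zero.2 h₁)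

theorem natDegree_toQuadraticForm'_map_C (hN : N.toQuadraticForm'.Anisotropic) {f : n → F[X]}
    (hf : f ≠ 0) :
    ((N.map C).toQuadraticForm' f).natDegree = 2 * Finset.univ.sup fun i => (f i).natDegree :=
  (natDegree_toQuadraticForm'_map_C_le N fun i =>
    Finset.le_sup (f := fun i => (f i).natDegree) (Finset.mem_univ i)).antisymm
    (le_natDegree_of_ne_zero (coeff_toQuadraticForm'_map_C_ne_zero hN hf))

theorem anisotropic_toQuadraticForm'_map_C (hN : N.toQuadraticForm'.Anisotropic) :
    (N.map C).toQuadraticForm'.Anisotropic := fun f h => by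
  by_contra hf
  exact coeff_toQuadraticForm'_map_C_ne_zero hN hf (by rw [h, coeff_zero])

end Polynomial

section AdjoinRoot

variable {K : Type*} [CommRing K] (M : Matrix n n K) (p : K[X])

theorem toQuadraticForm'_map_algebraMap_adjoinRoot_mk (f : n → K[X]) :
    (M.map (algebraMap K (AdjoinRoot p))).toQuadraticForm' (AdjoinRoot.mk p ∘ f) =
      AdjoinRoot.mk p ((M.map C).toQuadraticForm' f) := by
  rw [map_toQuadraticForm', Matrix.map_map]
  rfl

variable {M p}

theorem dvd_of_anisotropic_toQuadraticForm'_map_adjoinRoot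
    (h : (M.map (algebraMap K (AdjoinRoot p))).toQuadraticForm'.Anisotropic) {f : n → K[X]}
    (hf : p ∣ (M.map C).toQuadraticForm' f) (i : n) : p ∣ f i := by
  have := h _ (by rwa [toQuadraticForm'_map_algebraMap_adjoinRoot_mk, AdjoinRoot.mk_eq_zero])
  exact AdjoinRoot.mk_eq_zero.1 (congrFun this i)

end AdjoinRoot

section OddDegree

variable {F : Type*} [Field F] {N : Matrix n n F} {p : F[X]}

theorem exists_primitive_dvd_toQuadraticForm'_map_C (hp : Prime p) {f : n → F[X]} (hf : f ≠ 0)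
    (hfd : ∀ i, (f i).natDegree < p.natDegree) (hpf : p ∣ (N.map C).toQuadraticForm' f) :
    ∃ f' : n → F[X], f' ≠ 0 ∧ (∀ i, (f' i).natDegree < p.natDegree) ∧
      p ∣ (N.map C).toQuadraticForm' f' ∧ ∀ g, (∀ i, g ∣ f' i) → IsUnit g := by
  classical
  obtain ⟨i₀, hi₀⟩ := Function.ne_iff.1 hf
  obtain ⟨f', hff', hgcd⟩ := Finset.extract_gcd f ⟨i₀, Finset.mem_univ _⟩
  set g₀ := Finset.univ.gcd f
  have hf_eq : f = g₀ • f' := funext fun i => hff' i (Finset.mem_univ _)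
  have hg₀ : g₀ ≠ 0 := fun h => hi₀ (by rw [hf_eq, h, zero_smul])
  have hpg₀ : ¬ p ∣ g₀ := fun h =>
    (natDegree_le_of_dvd (h.trans (Finset.gcd_dvd (Finset.mem_univ i₀))) hi₀).not_gt (hfd i₀)
  refine ⟨f', fun h => hi₀ (by rw [hf_eq, h, smul_zero]), fun i => ?_, ?_,
    fun g hg => isUnit_of_dvd_one (hgcd ▸ Finset.dvd_gcd fun i _ => hg i)⟩
  · by_cases hi : f' i = 0
    · rw [hi, natDegree_zero]
      exact (Nat.zero_le _).trans_lt (hfd i₀)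
    · calc (f' i).natDegree ≤ (f i).natDegree := by
            rw [hf_eq, Pi.smul_apply, smul_eq_mul, natDegree_mul hg₀ hi]
            exact Nat.le_add_left _ _
        _ < p.natDegree := hfd i
  · rw [hf_eq, QuadraticMap.map_smul, smul_eq_mul] at hpf
    exact (hp.dvd_or_dvd hpf).resolve_left fun h => (hp.dvd_or_dvd h).elim hpg₀ hpg₀

theorem exists_irreducible_dvd_toQuadraticForm'_map_C (hN : N.toQuadraticForm'.Anisotropic)
    (hodd : Odd p.natDegree) {f : n → F[X]} (hf : f ≠ 0)
    (hfd : ∀ i, (f i).natDegree < p.natDegree) (hpf : p ∣ (N.map C).toQuadraticForm' f) :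
    ∃ g : F[X], Irreducible g ∧ Odd g.natDegree ∧ g.natDegree < p.natDegree ∧
      g ∣ (N.map C).toQuadraticForm' f := by
  obtain ⟨h, hh⟩ := hpf
  have hQ : (N.map C).toQuadraticForm' f ≠ 0 := fun h =>
    hf (anisotropic_toQuadraticForm'_map_C hN f h)
  have hp0 : p ≠ 0 := by rintro rfl; exact hQ (by rw [hh, zero_mul])
  have hh0 : h ≠ 0 := by rintro rfl; exact hQ (by rw [hh, mul_zero])
  have hdeg := natDegree_toQuadraticForm'_map_C hN hf
  rw [hh, natDegree_mul hp0 hh0] at hdeg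
  have hm : (Finset.univ.sup fun i => (f i).natDegree) < p.natDegree :=
    (Finset.sup_lt_iff hodd.pos).2 fun i _ => hfd i
  obtain ⟨g, hg, hgh, hgo⟩ := exists_irreducible_dvd_odd_natDegree (h := h) (by
    rw [Nat.odd_iff] at hodd ⊢; omega)
  refine ⟨g, hg, hgo, (natDegree_le_of_dvd hgh hh0).trans_lt (by omega), hh ▸ hgh.mul_left p⟩

theorem anisotropic_toQuadraticForm'_map_adjoinRoot (hN : N.toQuadraticForm'.Anisotropic)
    (hp : Irreducible p) (hodd : Odd p.natDegree) :
    (N.map (algebraMap F (AdjoinRoot p))).toQuadraticForm'.Anisotropic := by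
  induction hd : p.natDegree using Nat.strong_induction_on generalizing p with
  | _ d ih =>
  subst hd
  suffices key : ∀ f : n → F[X], (∀ i, (f i).natDegree < p.natDegree) →
      p ∣ (N.map C).toQuadraticForm' f → f = 0 by
    intro y hy
    choose f hfd hfy using fun i => AdjoinRoot.exists_natDegree_lt_mk_eq hodd.pos.ne' (y i)
    have hf : AdjoinRoot.mk p ∘ f = y := funext hfy
    rw [← hf, key f hfd (by rwa [← AdjoinRoot.mk_eq_zero,
      ← toQuadraticForm'_map_algebraMap_adjoinRoot_mk, hf])]
    exact funext fun _ => map_zero _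
  intro f hfd hpf
  by_contra hf
  obtain ⟨f', hf', hfd', hpf', hprim⟩ :=
    exists_primitive_dvd_toQuadraticForm'_map_C hp.prime hf hfd hpf
  obtain ⟨g, hg, hgo, hgd, hgf⟩ :=
    exists_irreducible_dvd_toQuadraticForm'_map_C hN hodd hf' hfd' hpf'
  exact hg.not_isUnit <| hprim g <|
    dvd_of_anisotropic_toQuadraticForm'_map_adjoinRoot (ih _ hgd hg hgo rfl) hgf

end OddDegree

section Extension

open IntermediateField _root_.Module

variable {F : Type*} [Field F] {N : Matrix n n F}

theorem anisotropic_toQuadraticForm'_map_adjoin_simple (hN : N.toQuadraticForm'.Anisotropic)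
    {E : Type*} [Field E] [Algebra F E] {x : E} (hx : IsIntegral F x)
    (hodd : Odd (finrank F F⟮x⟯)) : (N.map (algebraMap F F⟮x⟯)).toQuadraticForm'.Anisotropic := by
  rw [adjoin.finrank hx] at hodd
  exact anisotropic_toQuadraticForm'_map_algebraMap_of_algHom
    (adjoinRootEquivAdjoin F hx).symm.toAlgHom (AlgEquiv.injective _)
    (anisotropic_toQuadraticForm'_map_adjoinRoot hN (minpoly.irreducible hx) hodd)

theorem anisotropic_toQuadraticForm'_map_of_odd_finrank (hN : N.toQuadraticForm'.Anisotropic)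
    {E : Type*} [Field E] [Algebra F E] [FiniteDimensional F E] (hodd : Odd (finrank F E)) :
    (N.map (algebraMap F E)).toQuadraticForm'.Anisotropic := by
  suffices ∀ K : IntermediateField F E, (N.map (algebraMap F K)).toQuadraticForm'.Anisotropic from
    anisotropic_toQuadraticForm'_map_algebraMap_of_algHom topEquiv.symm.toAlgHom
      (AlgEquiv.injective _) (this ⊤)
  refine induction_on_adjoin _ ?_ fun K x hK => ?_
  · refine anisotropic_toQuadraticForm'_map_algebraMap_of_algHom (botEquiv F E).toAlgHom
      (AlgEquiv.injective _) ?_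
    rwa [Algebra.algebraMap_self, RingHom.coe_id, Matrix.map_id]
  · have hodd' : Odd (finrank F K * (finrank K K⟮x⟯ * finrank K⟮x⟯ E)) := by
      rwa [finrank_mul_finrank, finrank_mul_finrank]
    have := anisotropic_toQuadraticForm'_map_adjoin_simple (N := N.map (algebraMap F K)) hK
      (IsIntegral.of_finite K x) (Nat.odd_mul.1 (Nat.odd_mul.1 hodd').2).1
    rwa [Matrix.map_map, ← RingHom.coe_comp, ← IsScalarTower.algebraMap_eq] at this

end Extension

end Matrix

namespace QuadraticForm

open TensorProduct

variable {n : Type*} [Fintype n] [DecidableEq n]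

theorem toQuadraticForm'_toMatrix' {R : Type*} [CommRing R] [Invertible (2 : R)]
    (Q : QuadraticForm R (n → R)) : Q.toMatrix'.toQuadraticForm' = Q := by
  rw [toMatrix', Matrix.toQuadraticForm', Matrix.toLinearMap₂'_toMatrix',
    QuadraticMap.toQuadraticMap_associated]

theorem baseChange_eq_toQuadraticForm'_comp {R : Type*} (A : Type*) [CommRing R] [CommRing A]
    [Algebra R A] [Invertible (2 : R)] (Q : QuadraticForm R (n → R)) :
    Q.baseChange A = (Q.toMatrix'.map (algebraMap R A)).toQuadraticForm'.comp
      (piScalarRight R A A n).toLinearMap := by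
  ext m
  have hm : piScalarRight R A A n (1 ⊗ₜ m) = algebraMap R A ∘ m := by
    ext i
    simp [Algebra.algebraMap_eq_smul_one]
  rw [baseChange_tmul, QuadraticMap.comp_apply, LinearEquiv.coe_coe, hm,
    ← Matrix.map_toQuadraticForm', toQuadraticForm'_toMatrix', mul_one, Algebra.smul_def, mul_one]

theorem _root_.QuadraticMap.Anisotropic.baseChange_of_odd_finrank {F E : Type*} [Field F]
    [Invertible (2 : F)] [Field E] [Algebra F E] [FiniteDimensional F E]
    (hodd : Odd (Module.finrank F E))
    {Q : QuadraticForm F (n → F)} (hQ : Q.Anisotropic) : (Q.baseChange E).Anisotropic := by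
  intro v hv
  rw [baseChange_eq_toQuadraticForm'_comp] at hv
  have := Matrix.anisotropic_toQuadraticForm'_map_of_odd_finrank
    (by rwa [toQuadraticForm'_toMatrix']) hodd _ hv
  exact (piScalarRight F E E n).injective (this.trans (map_zero _).symm)

end QuadraticForm

theorem stmt15_general (F : Type*) [Field F] [Invertible (2 : F)]
    (E : Type*) [Field E] [Algebra F E] [FiniteDimensional F E]
    (hodd : Odd (Module.finrank F E))
    (q : QuadraticForm F (Fin 3 → F))
    (hE : ∃ v : E ⊗[F] (Fin 3 → F), v ≠ 0 ∧ q.baseChange E v = 0) :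
    ∃ w : Fin 3 → F, w ≠ 0 ∧ q w = 0 := by
  rw [← QuadraticMap.not_anisotropic_iff_exists] at hE ⊢
  exact fun hq : q.Anisotropic => hE (hq.baseChange_of_odd_finrank hodd)

/-- Springer's theorem for conics: a smooth conic over a field `F`
(a nondegenerate ternary quadratic form `q`) with a point over a finite
field extension `E/F` of odd degree has an `F`-rational point. -/
theorem stmt15 (F : Type*) [Field F] [Invertible (2 : F)]
    (E : Type*) [Field E] [Algebra F E] [FiniteDimensional F E]
    (hodd : Odd (Module.finrank F E))
    (q : QuadraticForm F (Fin 3 → F))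
    (hq : (QuadraticMap.associated (R := F) q).Nondegenerate)
    (hE : ∃ v : E ⊗[F] (Fin 3 → F), v ≠ 0 ∧ q.baseChange E v = 0) :
    ∃ w : Fin 3 → F, w ≠ 0 ∧ q w = 0 :=
  stmt15_general F E hodd q hE
end
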